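/- arXiv:1510.02767 — 3 statements merged into one kernel-verified Lean document; each statement's English description precedes it below -/
import Mathlib

section
/- Let M ⊂ Z_d^{2n} be a Lagrangian subspace with basis B, and for v ∈ M define ρ_{M,v} = d^{-n} Σ_{m ∈ M} ω^{[v,m]} w_B(m). Then ρ_{M,v} is a rank-one orthogonal projection: ρ_{M,v}^2 = ρ_{M,v} and tr(ρ_{M,v}) = 1. -/
/-!
Write `w(p, q) = τ^{-p·q} Z^p X^q`. The clock–shift matrices `Z^p X^q` multiply up to a phase
and are traceless unless `(p, q) = 0`, and `τ^{d²} = 1` makes every `w(u)` of order dividing `d`.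
Since the `w(u)`, `u ∈ M`, commute on the isotropic `M`, the map `m ↦ ω^{[v,m]} w_B(m)` is
multiplicative on `M`, so `T = Σ_m ω^{[v,m]} w_B(m)` satisfies `T² = |M| T = d^n T`, while only
`m = 0` contributes to `tr T = d^n`.
-/

noncomputable section

open scoped Classical

/-- The phase space `V = ℤ_d^n × ℤ_d^n ≃ ℤ_d^{2n}` (momentum and position parts). -/
abbrev PhaseSpace (d n : ℕ) := (Fin n → ZMod d) × (Fin n → ZMod d)

/-- The standard symplectic form `[u,v] = uᵀ J v` on `ℤ_d^{2n}`. -/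
def sform {d n : ℕ} (u v : PhaseSpace d n) : ZMod d :=
  ∑ i, (u.1 i * v.2 i - u.2 i * v.1 i)

/-- A Lagrangian (maximally isotropic) subspace of the phase space. -/
def IsLagrangian {d n : ℕ} (M : Submodule (ZMod d) (PhaseSpace d n)) : Prop :=
  (∀ x ∈ M, ∀ y ∈ M, sform x y = 0) ∧ Module.finrank (ZMod d) M = n

/-- `ω = e^{2πi/d}`. -/
def omegaC (d : ℕ) : ℂ := Complex.exp (2 * Real.pi * Complex.I / d)

/-- `τ = (-1)^d e^{πi/d}`. -/
def tauC (d : ℕ) : ℂ := (-1) ^ d * Complex.exp (Real.pi * Complex.I / d)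

/-- The `n`-qudit Weyl operator `w(p,q) = w(p₁,q₁) ⊗ ⋯ ⊗ w(pₙ,qₙ)` on `(ℂ^d)^{⊗n}`,
written out in matrix entries: `w(p,q)_{x,y} = τ^{-Σᵢ pᵢqᵢ} ω^{p·x} δ_{x,y+q}`
(the exponent of `τ` being computed in the integers from representatives). -/
def weylN (d n : ℕ) (v : PhaseSpace d n) :
    Matrix (Fin n → ZMod d) (Fin n → ZMod d) ℂ := fun x y =>
  (tauC d ^ (-((∑ i, (v.1 i).val * (v.2 i).val : ℕ) : ℤ)))
    * omegaC d ^ ((∑ i, v.1 i * x i : ZMod d)).val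
    * (if x = y + v.2 then 1 else 0)

/-- The basis-dependent Weyl operators: given a basis `B = {u_i}` of a subspace
`M` and `m = Σ mᵢ uᵢ ∈ M`, set `w_B(m) = Πᵢ w(uᵢ)^{mᵢ}`. This turns `m ↦ w_B(m)`
into a true (non-projective) representation of `M` when `M` is isotropic. -/
def weylB {d n : ℕ} [NeZero d] {M : Submodule (ZMod d) (PhaseSpace d n)}
    {ι : Type*} [Fintype ι] (b : Module.Basis ι (ZMod d) M) (m : M) :
    Matrix (Fin n → ZMod d) (Fin n → ZMod d) ℂ :=
  ((Finset.univ : Finset ι).toList.map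
    (fun i => weylN d n ((b i : PhaseSpace d n)) ^ ((b.repr m) i).val)).prod

/-- The stabilizer-state operator `ρ_{M,v} = d^{-n} Σ_{m∈M} ω^{[v,m]} w_B(m)`. -/
def stabRho {d n : ℕ} [NeZero d] {M : Submodule (ZMod d) (PhaseSpace d n)}
    {ι : Type*} [Fintype ι] (b : Module.Basis ι (ZMod d) M) (v : PhaseSpace d n) :
    Matrix (Fin n → ZMod d) (Fin n → ZMod d) ℂ :=
  ((d : ℂ) ^ n)⁻¹ • ∑ᶠ m : M, omegaC d ^ (sform v (m : PhaseSpace d n)).val • weylB b m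

open ZMod

lemma List.prod_map_mul_of_commute {β M : Type*} [Monoid M] {l : List β} {f g : β → M}
    (h : ∀ i ∈ l, ∀ j ∈ l, Commute (g i) (f j)) :
    (l.map fun i => f i * g i).prod = (l.map f).prod * (l.map g).prod := by
  induction l with
  | nil => simp
  | cons a l ih =>
    have hcomm : Commute (g a) (l.map f).prod :=
      Commute.list_prod_right _ _ fun _ hx => by
        obtain ⟨j, hj, rfl⟩ := List.mem_map.mp hx
        exact h a (by simp) j (by simp [hj])
    simp only [List.map_cons, List.prod_cons]
    rw [ih fun i hi j hj => h i (by simp [hi]) j (by simp [hj]), mul_assoc, ← mul_assoc (g a),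
      hcomm.eq, mul_assoc, mul_assoc]

lemma pow_val_add_of_pow_eq_one {M : Type*} [Monoid M] {d : ℕ} [NeZero d] {A : M}
    (hA : A ^ d = 1) (a b : ZMod d) : A ^ (a + b).val = A ^ a.val * A ^ b.val := by
  rw [ZMod.val_add, ← pow_eq_pow_mod _ hA, pow_add]

lemma Fintype.sum_mul_sum_eq_card_smul_of_map_add {G A : Type*} [AddGroup G] [Fintype G]
    [NonUnitalNonAssocSemiring A] (f : G → A) (hf : ∀ g h, f (g + h) = f g * f h) :
    (∑ g, f g) * ∑ g, f g = Fintype.card G • ∑ g, f g :=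
  calc (∑ g, f g) * ∑ g, f g = ∑ g, ∑ h, f (g + h) := by simp only [Finset.sum_mul_sum, hf]
    _ = ∑ _g : G, ∑ h, f h := Finset.sum_congr rfl fun g _ => Equiv.sum_comp (Equiv.addLeft g) f
    _ = Fintype.card G • ∑ h, f h := by rw [Finset.sum_const, Finset.card_univ]

lemma Module.Basis.card_eq_zmod_pow_finrank {d : ℕ} [NeZero d] {V ι : Type*} [AddCommGroup V]
    [Module (ZMod d) V] [Fintype V] [Fintype ι] (b : Module.Basis ι (ZMod d) V) :
    Fintype.card V = d ^ Module.finrank (ZMod d) V := by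
  -- over the zero ring `ZMod 1` a basis may have any index type, but `V` is trivial
  obtain rfl | hd := eq_or_ne d 1
  · have : Subsingleton V := Module.subsingleton (ZMod 1) V
    rw [one_pow]
    exact Fintype.card_eq_one_iff.mpr ⟨0, fun _ => Subsingleton.elim _ _⟩
  · have : Fact (1 < d) := ⟨by have := NeZero.ne d; omega⟩
    rw [Module.card_fintype b, ZMod.card, Module.finrank_eq_card_basis b]

lemma Nat.two_mul_choose_two_add_self (k : ℕ) : 2 * k.choose 2 + k = k ^ 2 := by
  have h : (2 * k.choose 2 + k : ℚ) = k ^ 2 := by rw [Nat.cast_choose_two]; ring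
  exact_mod_cast h

lemma sform_add_right {d n : ℕ} (u v w : PhaseSpace d n) :
    sform u (v + w) = sform u v + sform u w := by
  simp only [sform, ← Finset.sum_add_distrib, Prod.fst_add, Prod.snd_add, Pi.add_apply]
  exact Finset.sum_congr rfl fun _ _ => by ring

lemma tauC_sq {d : ℕ} : tauC d ^ 2 = omegaC d := by
  rw [tauC, mul_pow, ← pow_mul, pow_mul', neg_one_sq, one_pow, one_mul, ← Complex.exp_nat_mul,
    omegaC]
  congr 1
  ring

section Weyl

variable {d n : ℕ} [NeZero d]

lemma stdAddChar_natCast_eq_omegaC_pow (k : ℕ) : stdAddChar (k : ZMod d) = omegaC d ^ k := by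
  rw [stdAddChar_apply, toCircle_natCast, omegaC, ← Complex.exp_nat_mul]
  congr 1
  ring

lemma omegaC_pow_val (t : ZMod d) : omegaC d ^ t.val = stdAddChar t := by
  rw [← stdAddChar_natCast_eq_omegaC_pow, natCast_zmod_val]

lemma stdAddChar_eq_one_iff (t : ZMod d) : stdAddChar t = 1 ↔ t = 0 := by
  rw [← AddChar.map_zero_eq_one (stdAddChar (N := d)), injective_stdAddChar.eq_iff]

lemma tauC_pow_sq : tauC d ^ d ^ 2 = 1 := by
  have hd : (d : ℂ) ≠ 0 := NeZero.ne _
  rw [tauC, mul_pow, ← pow_mul, ← Complex.exp_nat_mul,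
    show ((d ^ 2 : ℕ) : ℂ) * (Real.pi * Complex.I / d) = d * (Real.pi * Complex.I) by
      push_cast; field_simp,
    Complex.exp_nat_mul, Complex.exp_pi_mul_I, ← pow_add, Even.neg_one_pow]
  rw [Nat.even_add, Nat.even_mul, Nat.even_pow]
  tauto

/-- The clock–shift matrix `Z^p X^q` for `u = (p, q)`, i.e. `w(u)` without its power of `τ`. -/
def clockShift (d n : ℕ) [NeZero d] (u : PhaseSpace d n) :
    Matrix (Fin n → ZMod d) (Fin n → ZMod d) ℂ := fun x y =>
  stdAddChar (u.1 ⬝ᵥ x) * if x = y + u.2 then 1 else 0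

lemma clockShift_zero : clockShift d n 0 = 1 := by
  ext x y
  simp [clockShift, Matrix.one_apply]

lemma clockShift_mul (u v : PhaseSpace d n) :
    clockShift d n u * clockShift d n v =
      stdAddChar (-(v.1 ⬝ᵥ u.2)) • clockShift d n (u + v) := by
  ext x z
  simp only [Matrix.mul_apply, clockShift, mul_ite, mul_one, mul_zero, Finset.sum_ite_eq',
    Finset.mem_univ, if_true, Matrix.smul_apply, smul_eq_mul, ite_mul, zero_mul]
  rw [Prod.snd_add, add_comm u.2, ← add_assoc]
  split_ifs with h
  · subst h
    rw [← AddChar.map_add_eq_mul, ← AddChar.map_add_eq_mul, Prod.fst_add]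
    simp only [dotProduct_add, add_dotProduct]
    congr 1
    abel
  · rfl

lemma clockShift_pow (u : PhaseSpace d n) (k : ℕ) :
    clockShift d n u ^ k =
      stdAddChar (-((k.choose 2 : ZMod d) * (u.1 ⬝ᵥ u.2))) •
        clockShift d n ((k : ZMod d) • u) := by
  induction k with
  | zero => simp [clockShift_zero]
  | succ k ih =>
    rw [pow_succ, ih, Matrix.smul_mul, clockShift_mul, smul_smul, ← AddChar.map_add_eq_mul,
      Prod.smul_snd, dotProduct_smul, Nat.choose_succ_succ', Nat.choose_one_right, Nat.cast_succ,
      add_smul, one_smul]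
    congr 2
    push_cast
    simp only [smul_eq_mul]
    ring

lemma sum_stdAddChar_dotProduct_eq_zero {p : Fin n → ZMod d} (hp : p ≠ 0) :
    ∑ x, stdAddChar (p ⬝ᵥ x) = 0 := by
  obtain ⟨i, hi⟩ := Function.ne_iff.mp hp
  let χ : AddChar (Fin n → ZMod d) ℂ :=
    stdAddChar.compAddMonoidHom (AddMonoidHom.mk' (p ⬝ᵥ ·) (dotProduct_add p))
  refine AddChar.sum_eq_zero_of_ne_one (ψ := χ) (AddChar.ne_one_iff.mpr ⟨Pi.single i 1, ?_⟩)
  simpa [χ, dotProduct_single, stdAddChar_eq_one_iff] using hi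

lemma trace_clockShift_of_ne_zero {u : PhaseSpace d n} (hu : u ≠ 0) :
    (clockShift d n u).trace = 0 := by
  simp only [Matrix.trace, Matrix.diag, clockShift, left_eq_add, mul_ite, mul_one, mul_zero]
  by_cases hq : u.2 = 0
  · simpa [hq] using sum_stdAddChar_dotProduct_eq_zero fun hp => hu (Prod.ext hp hq)
  · simp [hq]

lemma weylN_eq_smul_clockShift (u : PhaseSpace d n) :
    weylN d n u =
      tauC d ^ (-((∑ i, (u.1 i).val * (u.2 i).val : ℕ) : ℤ)) • clockShift d n u := by
  ext x y
  simp [weylN, clockShift, omegaC_pow_val, dotProduct]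

lemma weylN_pow_self (u : PhaseSpace d n) : weylN d n u ^ d = 1 := by
  -- `w(u)^d = τ^{-dS} ω^{-C(d,2) S}` and `ω = τ²`, so the total power of `τ` is
  -- `-(d + 2 C(d,2)) S = -d² S`.
  set S := ∑ i, (u.1 i).val * (u.2 i).val
  have hS : u.1 ⬝ᵥ u.2 = S := by simp [S, dotProduct]
  have hphase : stdAddChar (-((d.choose 2 : ZMod d) * (S : ZMod d))) =
      (tauC d ^ (2 * d.choose 2 * S))⁻¹ := by
    refine eq_inv_of_mul_eq_one_left ?_
    rw [pow_mul, pow_mul, tauC_sq, ← pow_mul, ← stdAddChar_natCast_eq_omegaC_pow,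
      ← AddChar.map_add_eq_mul]
    push_cast
    simp
  rw [weylN_eq_smul_clockShift, smul_pow, clockShift_pow, natCast_self, zero_smul, clockShift_zero,
    smul_smul, hS, hphase, zpow_neg, zpow_natCast, inv_pow, ← mul_inv, ← pow_mul, ← pow_add,
    show S * d + 2 * d.choose 2 * S = d ^ 2 * S by rw [← Nat.two_mul_choose_two_add_self]; ring,
    pow_mul, tauC_pow_sq, one_pow, inv_one, one_smul]

lemma commute_weylN_of_sform_eq_zero {u v : PhaseSpace d n} (h : sform u v = 0) :
    Commute (weylN d n u) (weylN d n v) := by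
  have hsymm : v.1 ⬝ᵥ u.2 = u.1 ⬝ᵥ v.2 := by
    rw [sform, Finset.sum_sub_distrib, sub_eq_zero] at h
    simp only [dotProduct, mul_comm (v.1 _)]
    exact h.symm
  rw [Commute, SemiconjBy, weylN_eq_smul_clockShift u, weylN_eq_smul_clockShift v,
    smul_mul_smul_comm, smul_mul_smul_comm, clockShift_mul, clockShift_mul, hsymm, add_comm u,
    mul_comm (tauC d ^ _)]

lemma exists_list_prod_smul_clockShift {β : Type*} (l : List β) (c : β → ℂ)
    (u : β → PhaseSpace d n) :
    ∃ c' : ℂ, (l.map fun i => c i • clockShift d n (u i)).prod =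
      c' • clockShift d n (l.map u).sum := by
  induction l with
  | nil => exact ⟨1, by simp [clockShift_zero]⟩
  | cons a l ih =>
    obtain ⟨c', hc'⟩ := ih
    simp only [List.map_cons, List.prod_cons, List.sum_cons, hc', smul_mul_smul_comm,
      clockShift_mul, smul_smul]
    exact ⟨_, rfl⟩

variable {M : Submodule (ZMod d) (PhaseSpace d n)} {ι : Type*} [Fintype ι]

lemma weylB_zero (b : Module.Basis ι (ZMod d) M) : weylB b 0 = 1 := by
  simp [weylB]

lemma weylB_add (hM : ∀ x ∈ M, ∀ y ∈ M, sform x y = 0) (b : Module.Basis ι (ZMod d) M)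
    (m m' : M) : weylB b (m + m') = weylB b m * weylB b m' := by
  unfold weylB
  rw [← List.prod_map_mul_of_commute fun i _ j _ => Commute.pow_pow
    (commute_weylN_of_sform_eq_zero (hM _ (b i).2 _ (b j).2)) _ _]
  simp only [map_add, Finsupp.add_apply, pow_val_add_of_pow_eq_one (weylN_pow_self _)]

lemma exists_weylB_eq_smul_clockShift (b : Module.Basis ι (ZMod d) M) (m : M) :
    ∃ c : ℂ, weylB b m = c • clockShift d n m := by
  have hfactor (i : ι) : ∃ c : ℂ, weylN d n (b i) ^ (b.repr m i).val =
      c • clockShift d n (b.repr m i • (b i : PhaseSpace d n)) := by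
    rw [weylN_eq_smul_clockShift, smul_pow, clockShift_pow, smul_smul, natCast_zmod_val]
    exact ⟨_, rfl⟩
  choose c hc using hfactor
  obtain ⟨c', hc'⟩ := exists_list_prod_smul_clockShift Finset.univ.toList c
    fun i => b.repr m i • (b i : PhaseSpace d n)
  refine ⟨c', ?_⟩
  rw [weylB, List.map_congr_left fun i _ => hc i, hc', Finset.sum_map_toList]
  congr 2
  conv_rhs => rw [← b.sum_repr m]
  rw [Submodule.coe_sum]
  rfl

lemma trace_weylB_of_ne_zero (b : Module.Basis ι (ZMod d) M) {m : M} (hm : m ≠ 0) :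
    (weylB b m).trace = 0 := by
  obtain ⟨c, hc⟩ := exists_weylB_eq_smul_clockShift b m
  rw [hc, Matrix.trace_smul, trace_clockShift_of_ne_zero (by simpa using hm), smul_zero]

end Weyl

theorem stabRho_is_rank_one_projection_general (d n : ℕ) [NeZero d]
    (M : Submodule (ZMod d) (PhaseSpace d n)) (hM : IsLagrangian M)
    {ι : Type*} [Fintype ι] (b : Module.Basis ι (ZMod d) M)
    (v : PhaseSpace d n) :
    stabRho b v * stabRho b v = stabRho b v ∧ (stabRho b v).trace = 1 := by
  let f (m : M) := stdAddChar (sform v m) • weylB b m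
  have hrho : stabRho b v = ((d : ℂ) ^ n)⁻¹ • ∑ m, f m := by
    simp [stabRho, finsum_eq_sum_of_fintype, omegaC_pow_val, f]
  have hf (m m' : M) : f (m + m') = f m * f m' := by
    simp only [f, Submodule.coe_add, sform_add_right, AddChar.map_add_eq_mul, weylB_add hM.1,
      smul_mul_smul_comm]
  have hcard : (Fintype.card M : ℂ) = (d : ℂ) ^ n := by
    rw [b.card_eq_zmod_pow_finrank, hM.2, Nat.cast_pow]
  have htrace : (∑ m, f m).trace = (d : ℂ) ^ n := by
    rw [Matrix.trace_sum, Finset.sum_eq_single_of_mem 0 (Finset.mem_univ _)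
      fun m _ hm => by rw [Matrix.trace_smul, trace_weylB_of_ne_zero b hm, smul_zero]]
    simp [f, sform, weylB_zero]
  have hdn : (d : ℂ) ^ n ≠ 0 := pow_ne_zero _ (NeZero.ne _)
  constructor
  · rw [hrho, smul_mul_smul_comm, Fintype.sum_mul_sum_eq_card_smul_of_map_add f hf,
      ← Nat.cast_smul_eq_nsmul ℂ, hcard, smul_smul, mul_assoc, inv_mul_cancel₀ hdn, mul_one]
  · rw [hrho, Matrix.trace_smul, htrace, smul_eq_mul, inv_mul_cancel₀ hdn]

/-- For a Lagrangian subspace `M ⊆ ℤ_d^{2n}` with basis `B` and `v ∈ M`, the operator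
`ρ_{M,v} = d^{-n} Σ_{m∈M} ω^{[v,m]} w_B(m)` is a rank-one orthogonal projection:
`ρ² = ρ` and `tr ρ = 1`. -/
theorem stabRho_is_rank_one_projection (d n : ℕ) (hd : d.Prime) [NeZero d]
    (M : Submodule (ZMod d) (PhaseSpace d n)) (hM : IsLagrangian M)
    {ι : Type*} [Fintype ι] (b : Module.Basis ι (ZMod d) M)
    (v : PhaseSpace d n) (hv : v ∈ M) :
    stabRho b v * stabRho b v = stabRho b v ∧ (stabRho b v).trace = 1 :=
  stabRho_is_rank_one_projection_general d n M hM b v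
end
end

section
/- For prime d and n ≥ 1, the number of stabilizer states in (C^d)^{⊗n} equals S(d,n) = d^n · Π_{j=1}^n (d^j + 1). Equivalently, this is d^n times the number of Lagrangian subspaces of Z_d^{2n}. -/
/-!
Count ordered isotropic frames (linearly independent, pairwise orthogonal tuples) of a
nondegenerate alternating form on `𝔽_q^{2n}`: once the first `i` vectors span `W`, the next one
ranges over `W^⊥ \ W`, which has `q^{2n-i} - q^i` elements. An isotropic `n`-frame is a
Lagrangian together with an ordered basis of it, and every Lagrangian has `∏_{i<n} (q^n - q^i)`
ordered bases, so there are `∏_{i<n} (q^{2n-i} - q^i) / (q^n - q^i) = ∏_{j=1}^n (q^j + 1)`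
Lagrangians; each of them has `q^n` cosets.
-/

open Module Submodule Set

instance Submodule.finite_of_finite {R M : Type*} [Semiring R] [AddCommMonoid M] [Module R M]
    [Finite M] : Finite (Submodule R M) :=
  Finite.of_injective _ SetLike.coe_injective

theorem Nat.card_sigma_of_forall_card_eq {ι : Type*} [Finite ι] {F : ι → Type*}
    [∀ i, Finite (F i)] {c : ℕ} (h : ∀ i, Nat.card (F i) = c) :
    Nat.card (Σ i, F i) = Nat.card ι * c := by
  have := Fintype.ofFinite ι
  rw [Nat.card_sigma, Finset.sum_congr rfl fun i _ => h i, Finset.sum_const, Finset.card_univ,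
    Nat.card_eq_fintype_card, smul_eq_mul]

theorem Nat.pow_two_mul_sub_sub_pow (q : ℕ) {n i : ℕ} (hi : i ≤ n) :
    q ^ (2 * n - i) - q ^ i = (q ^ n - q ^ i) * (q ^ (n - i) + 1) := by
  rw [Nat.sub_mul, mul_add, mul_add, mul_one, mul_one, ← pow_add, ← pow_add,
    show n + (n - i) = 2 * n - i by omega, show i + (n - i) = n by omega, add_comm (q ^ n),
    Nat.add_sub_add_right]

theorem Nat.prod_range_pow_two_mul_sub_sub_pow (q n : ℕ) :
    ∏ i ∈ Finset.range n, (q ^ (2 * n - i) - q ^ i) =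
      (∏ i ∈ Finset.range n, (q ^ n - q ^ i)) * ∏ j ∈ Finset.Icc 1 n, (q ^ j + 1) := by
  have hreflect : ∏ i ∈ Finset.range n, (q ^ (n - i) + 1) = ∏ j ∈ Finset.Icc 1 n, (q ^ j + 1) :=
    Finset.prod_nbij' (n - ·) (n - ·) (by simp; omega) (by simp; omega) (by simp; omega)
      (by simp; omega) (fun _ _ => rfl)
  rw [← hreflect, ← Finset.prod_mul_distrib]
  exact Finset.prod_congr rfl fun i hi => Nat.pow_two_mul_sub_sub_pow q (Finset.mem_range.1 hi).le

namespace LinearMap.BilinForm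

variable {K V : Type*} [Field K] [AddCommGroup V] [Module K V] (B : LinearMap.BilinForm K V)

abbrev IsotropicFrame (k : ℕ) : Type _ :=
  {f : Fin k → V // LinearIndependent K f ∧ ∀ i j, B (f i) (f j) = 0}

abbrev IsotropicSubspace (k : ℕ) : Type _ :=
  {W : Submodule K V // (∀ x ∈ W, ∀ y ∈ W, B x y = 0) ∧ finrank K W = k}

variable {B}

theorem mem_orthogonal_span_range_iff {ι : Type*} {s : ι → V} {v : V} :
    v ∈ B.orthogonal (span K (Set.range s)) ↔ ∀ i, B (s i) v = 0 := by
  refine mem_orthogonal_iff.trans ⟨fun h i => h _ (subset_span ⟨i, rfl⟩), fun h u hu => ?_⟩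
  exact span_le.2 (Set.range_subset_iff.2 h : Set.range s ⊆ LinearMap.ker (B.flip v)) hu

theorem span_range_le_orthogonal {ι : Type*} {s : ι → V} (h : ∀ i j, B (s i) (s j) = 0) :
    span K (Set.range s) ≤ B.orthogonal (span K (Set.range s)) :=
  span_le.2 <| Set.range_subset_iff.2 fun j => mem_orthogonal_span_range_iff.2 fun i => h i j

theorem isotropic_finSucc_iff (hAlt : B.IsAlt) {k : ℕ} {f : Fin (k + 1) → V} :
    (∀ i j, B (f i) (f j) = 0) ↔
      (∀ i j, B (Fin.tail f i) (Fin.tail f j) = 0) ∧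
        f 0 ∈ B.orthogonal (span K (Set.range (Fin.tail f))) := by
  rw [mem_orthogonal_span_range_iff]
  refine ⟨fun h => ⟨fun i j => h _ _, fun i => h _ _⟩, fun ⟨htail, h0⟩ i j => ?_⟩
  cases i using Fin.cases <;> cases j using Fin.cases
  · exact hAlt.self_eq_zero _
  · exact hAlt.isRefl _ _ (h0 _)
  · exact h0 _
  · exact htail _ _

def isotropicFrameSuccEquiv (hAlt : B.IsAlt) (k : ℕ) :
    B.IsotropicFrame (k + 1) ≃ Σ s : B.IsotropicFrame k,
      ((B.orthogonal (span K (Set.range s.1)) : Set V) \ span K (Set.range s.1) : Set V) where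
  toFun f := ⟨⟨Fin.tail f.1, (linearIndependent_finSucc.1 f.2.1).1,
      ((isotropic_finSucc_iff hAlt).1 f.2.2).1⟩,
    ⟨f.1 0, ((isotropic_finSucc_iff hAlt).1 f.2.2).2, (linearIndependent_finSucc.1 f.2.1).2⟩⟩
  invFun s := ⟨Fin.cons s.2.1 s.1.1, linearIndependent_finCons.2 ⟨s.1.2.1, s.2.2.2⟩,
    (isotropic_finSucc_iff hAlt).2 ⟨s.1.2.2, s.2.2.1⟩⟩
  left_inv f := Subtype.ext (Fin.cons_self_tail f.1)
  right_inv _ := rfl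

variable [Fintype K] [Finite V]

theorem card_orthogonal_diff_span (hB : B.Nondegenerate) {k : ℕ} (s : B.IsotropicFrame k) :
    Nat.card ((B.orthogonal (span K (Set.range s.1)) : Set V) \ span K (Set.range s.1) : Set V) =
      Fintype.card K ^ (finrank K V - k) - Fintype.card K ^ k := by
  set W := span K (Set.range s.1)
  have hW : finrank K W = k := by rw [finrank_span_eq_card s.2.1, Fintype.card_fin]
  have hcardW : Nat.card W = Fintype.card K ^ k := by
    rw [natCard_eq_pow_finrank (K := K), hW, Nat.card_eq_fintype_card]
  have hcardO : Nat.card (B.orthogonal W) = Fintype.card K ^ (finrank K V - k) := by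
    rw [natCard_eq_pow_finrank (K := K), finrank_orthogonal hB, hW, Nat.card_eq_fintype_card]
  rw [Nat.card_coe_set_eq, Set.ncard_sdiff (span_range_le_orthogonal s.2.2), ← hcardW, ← hcardO]
  rfl

theorem card_isotropicFrame (hB : B.Nondegenerate) (hAlt : B.IsAlt) (k : ℕ) :
    Nat.card (B.IsotropicFrame k) =
      ∏ i ∈ Finset.range k, (Fintype.card K ^ (finrank K V - i) - Fintype.card K ^ i) := by
  induction k with
  | zero =>
    have : Unique (B.IsotropicFrame 0) :=
      ⟨⟨finZeroElim, linearIndependent_empty_type, finZeroElim⟩,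
        fun _ => Subtype.ext (funext finZeroElim)⟩
    simp
  | succ k ih =>
    rw [Nat.card_congr (isotropicFrameSuccEquiv hAlt k),
      Nat.card_sigma_of_forall_card_eq (card_orthogonal_diff_span hB), ih, Finset.prod_range_succ]

def IsotropicFrame.span {k : ℕ} (f : B.IsotropicFrame k) : B.IsotropicSubspace k :=
  ⟨Submodule.span K (Set.range f.1),
    fun _ hx _ hy => mem_orthogonal_iff.1 (span_range_le_orthogonal f.2.2 hy) _ hx,
    by rw [finrank_span_eq_card f.2.1, Fintype.card_fin]⟩

def isotropicFrameSpanFiberEquiv {k : ℕ} (W : B.IsotropicSubspace k) :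
    {f : B.IsotropicFrame k // f.span = W} ≃ {g : Fin k → W.1 // LinearIndependent K g} where
  toFun f := ⟨fun i => ⟨f.1.1 i, congrArg Subtype.val f.2 ▸ subset_span ⟨i, rfl⟩⟩,
    .of_comp W.1.subtype f.1.2.1⟩
  invFun g :=
    let f : B.IsotropicFrame k := ⟨fun i => g.1 i, g.2.map' _ (ker_subtype _),
      fun i j => W.2.1 _ (g.1 i).2 _ (g.1 j).2⟩
    ⟨f, Subtype.ext <| eq_of_le_of_finrank_le
      (span_le.2 <| Set.range_subset_iff.2 fun i => (g.1 i).2) (W.2.2.trans f.span.2.2.symm).le⟩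
  left_inv _ := rfl
  right_inv _ := rfl

theorem card_isotropicSubspace_mul (k : ℕ) :
    Nat.card (B.IsotropicSubspace k) *
        ∏ i ∈ Finset.range k, (Fintype.card K ^ k - Fintype.card K ^ i) =
      Nat.card (B.IsotropicFrame k) := by
  have hfiber (W : B.IsotropicSubspace k) : Nat.card {f : B.IsotropicFrame k // f.span = W} =
      ∏ i ∈ Finset.range k, (Fintype.card K ^ k - Fintype.card K ^ i) := by
    rw [Nat.card_congr (isotropicFrameSpanFiberEquiv W), card_linearIndependent W.2.2.ge, W.2.2,
      Fin.prod_univ_eq_prod_range (fun i => Fintype.card K ^ k - Fintype.card K ^ i)]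
  rw [Nat.card_congr (Equiv.sigmaFiberEquiv IsotropicFrame.span).symm,
    Nat.card_sigma_of_forall_card_eq hfiber]

theorem card_isotropicSubspace_of_finrank_eq_two_mul (hB : B.Nondegenerate) (hAlt : B.IsAlt)
    {n : ℕ} (hV : finrank K V = 2 * n) :
    Nat.card (B.IsotropicSubspace n) = ∏ j ∈ Finset.Icc 1 n, (Fintype.card K ^ j + 1) := by
  have hpos : 0 < ∏ i ∈ Finset.range n, (Fintype.card K ^ n - Fintype.card K ^ i) :=
    Finset.prod_pos fun i hi => Nat.sub_pos_of_lt <|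
      Nat.pow_lt_pow_right Fintype.one_lt_card (Finset.mem_range.1 hi)
  refine Nat.eq_of_mul_eq_mul_right hpos ?_
  rw [card_isotropicSubspace_mul, card_isotropicFrame hB hAlt, hV,
    Nat.prod_range_pow_two_mul_sub_sub_pow, mul_comm]

end LinearMap.BilinForm

def sformBilin (d n : ℕ) : LinearMap.BilinForm (ZMod d) (PhaseSpace d n) :=
  LinearMap.mk₂ (ZMod d) sform
    (fun _ _ _ => by
      simp only [sform, ← Finset.sum_add_distrib]
      exact Finset.sum_congr rfl fun _ _ => by simp; ring)
    (fun _ _ _ => by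
      simp only [sform, Finset.smul_sum]
      exact Finset.sum_congr rfl fun _ _ => by simp; ring)
    (fun _ _ _ => by
      simp only [sform, ← Finset.sum_add_distrib]
      exact Finset.sum_congr rfl fun _ _ => by simp; ring)
    (fun _ _ _ => by
      simp only [sform, Finset.smul_sum]
      exact Finset.sum_congr rfl fun _ _ => by simp; ring)

theorem sformBilin_isAlt (d n : ℕ) : (sformBilin d n).IsAlt := fun x =>
  (Finset.sum_eq_zero fun _ _ => sub_eq_zero.2 (mul_comm _ _) : sform x x = 0)

theorem sformBilin_nondegenerate (d n : ℕ) : (sformBilin d n).Nondegenerate := by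
  refine (sformBilin_isAlt d n).isRefl.nondegenerate_iff_separatingLeft.2 fun x hx => ?_
  ext i
  · simpa [sformBilin, sform, Pi.single_apply] using hx (0, Pi.single i 1)
  · simpa [sformBilin, sform, Pi.single_apply] using hx (Pi.single i 1, 0)

theorem finrank_phaseSpace (d n : ℕ) [Fact d.Prime] :
    finrank (ZMod d) (PhaseSpace d n) = 2 * n := by
  simp [two_mul]

theorem card_stabilizer_states_general (d n : ℕ) (hd : d.Prime) :
    Nat.card ((M : {M : Submodule (ZMod d) (PhaseSpace d n) // IsLagrangian M}) ×
        (PhaseSpace d n ⧸ M.1))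
      = d ^ n * ∏ j ∈ Finset.Icc 1 n, (d ^ j + 1) := by
  have := Fact.mk hd
  have hquot (M : {M : Submodule (ZMod d) (PhaseSpace d n) // IsLagrangian M}) :
      Nat.card (PhaseSpace d n ⧸ M.1) = d ^ n := by
    have hrank := finrank_quotient_add_finrank M.1
    rw [finrank_phaseSpace, M.2.2] at hrank
    rw [natCard_eq_pow_finrank (K := ZMod d), Nat.card_zmod, show finrank _ _ = n by omega]
  have hlag : Nat.card {M : Submodule (ZMod d) (PhaseSpace d n) // IsLagrangian M} =
      ∏ j ∈ Finset.Icc 1 n, (d ^ j + 1) := by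
    have h := (sformBilin d n).card_isotropicSubspace_of_finrank_eq_two_mul
      (sformBilin_nondegenerate d n) (sformBilin_isAlt d n) (finrank_phaseSpace d n)
    rwa [ZMod.card] at h
  rw [Nat.card_sigma_of_forall_card_eq hquot, hlag, mul_comm]

/-- **Number of stabilizer states.** A stabilizer state in `(ℂ^d)^{⊗n}` is specified
by a Lagrangian subspace `M ⊆ ℤ_d^{2n}` together with a coset in `V/M` (distinct
pairs give distinct states). For prime `d` and `n ≥ 1`, their number equals
`S(d,n) = d^n · Π_{j=1}^n (d^j + 1)`, i.e. `d^n` times the number of Lagrangians. -/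
theorem card_stabilizer_states (d n : ℕ) (hd : d.Prime) (hn : 1 ≤ n) :
    Nat.card ((M : {M : Submodule (ZMod d) (PhaseSpace d n) // IsLagrangian M}) ×
        (PhaseSpace d n ⧸ M.1))
      = d ^ n * ∏ j ∈ Finset.Icc 1 n, (d ^ j + 1) :=
  card_stabilizer_states_general d n hd
end

section
/- Define F_t(d,n) = S(d,n)^{-1} Σ_{k=0}^n binom(n,k)_d d^{(n-k)(n-k+3-2t)/2} with S(d,n) = d^n Π_{j=1}^n (d^j+1). Then F_t(d,1) = (d^{2-t}+1)/((d+1)d) and F_t(d,n+1)/F_t(d,n) = (d^{n-(t-2)}+1)/(d(d^{n+1}+1)) for all primes d, n ≥ 1, t ≥ 1. -/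
/-!
Write `G_t(d,n) = Σ_k binom(n,k)_d w(n-k)` with `w(m) = d^{m(m+3-2t)/2}`, so that
`F_t(d,n) = G_t(d,n) / S(d,n)`. Pascal's identity splits `G_t(d,n+1)` into a sum carrying the
extra factor `d^k` and weight `w(n+1-k)`, plus `G_t(d,n)` itself; since
`d^k w(n-k+1) = d^{n+2-t} w(n-k)`, the first sum is `d^{n+2-t} G_t(d,n)`. Hence
`G_t(d,n+1) = (d^{n+2-t} + 1) G_t(d,n)`, and dividing by `S(d,n+1) = d (d^{n+1}+1) S(d,n)` gives the
recursion; the value at `n = 1` is its instance at `n = 0`, where `F_t(d,0) = 1`.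
-/

/-- The Gaussian binomial coefficient `binom(n,k)_d`. -/
noncomputable def gbinom (d n k : ℕ) : ℚ :=
  if k ≤ n then ∏ i ∈ Finset.range k, ((d : ℚ) ^ (n - i) - 1) / ((d : ℚ) ^ (k - i) - 1)
  else 0

/-- `S(d,n) = d^n · Π_{j=1}^n (d^j + 1)`, the number of stabilizer states in
dimension `d^n`. -/
def Scard (d n : ℕ) : ℕ := d ^ n * ∏ j ∈ Finset.Icc 1 n, (d ^ j + 1)

/-- The `t`-th frame potential of the stabilizer states in dimension `d^n`:
`F_t(d,n) = S(d,n)⁻¹ Σ_{k=0}^n binom(n,k)_d d^{(n-k)(n-k+3-2t)/2}`. -/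
noncomputable def framePot (d t n : ℕ) : ℚ :=
  (Scard d n : ℚ)⁻¹ * ∑ k ∈ Finset.range (n + 1),
    gbinom d n k * (d : ℚ) ^ ((((n : ℤ) - k) * ((n : ℤ) - k + 3 - 2 * t)) / 2)

open Finset

section GaussianBinomial

variable {d : ℕ}

theorem natCast_pow_sub_one_ne_zero (hd : d ≠ 1) {m : ℕ} (hm : m ≠ 0) :
    (d : ℚ) ^ m - 1 ≠ 0 :=
  sub_ne_zero.mpr fun h =>
    hd (by exact_mod_cast (pow_eq_one_iff_of_nonneg (Nat.cast_nonneg d) hm).mp h)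

theorem gbinom_zero_right (n : ℕ) : gbinom d n 0 = 1 := by
  simp [gbinom]

theorem gbinom_of_lt {n k : ℕ} (h : n < k) : gbinom d n k = 0 :=
  if_neg (by omega)

theorem gbinom_pos (hd : 1 < d) {n k : ℕ} (hk : k ≤ n) : 0 < gbinom d n k := by
  rw [gbinom, if_pos hk]
  refine prod_pos fun i hi => div_pos ?_ ?_ <;>
  · have := mem_range.mp hi
    exact sub_pos.mpr (one_lt_pow₀ (by exact_mod_cast hd) (by omega))

theorem gbinom_succ_succ_eq_mul (n k : ℕ) :
    gbinom d (n + 1) (k + 1) =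
      ((d : ℚ) ^ (n + 1) - 1) / ((d : ℚ) ^ (k + 1) - 1) * gbinom d n k := by
  by_cases hk : k ≤ n
  · rw [gbinom, gbinom, if_pos (by omega), if_pos hk, prod_range_succ', mul_comm]
    simp only [Nat.add_sub_add_right, Nat.sub_zero]
  · rw [gbinom_of_lt (by omega), gbinom_of_lt (by omega), mul_zero]

theorem gbinom_succ_mul (hd : d ≠ 1) (n k : ℕ) :
    gbinom d n (k + 1) * ((d : ℚ) ^ (k + 1) - 1) = gbinom d n k * ((d : ℚ) ^ (n - k) - 1) := by
  rcases lt_trichotomy k n with hk | rfl | hk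
  · have hden : ∏ i ∈ range k, ((d : ℚ) ^ (k - i) - 1) ≠ 0 :=
      prod_ne_zero_iff.mpr fun i hi =>
        natCast_pow_sub_one_ne_zero hd (by have := mem_range.mp hi; omega)
    have hk1 := natCast_pow_sub_one_ne_zero hd k.add_one_ne_zero
    rw [gbinom, gbinom, if_pos (show k + 1 ≤ n from hk), if_pos hk.le, prod_div_distrib,
      prod_div_distrib, prod_range_succ, prod_range_succ' (fun i => (d : ℚ) ^ (k + 1 - i) - 1)]
    simp only [Nat.add_sub_add_right, Nat.sub_zero]
    field_simp
  · simp [gbinom_of_lt]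
  · simp [gbinom_of_lt, hk, hk.trans k.lt_succ_self]

theorem gbinom_succ_succ (hd : d ≠ 1) (n k : ℕ) :
    gbinom d (n + 1) (k + 1) = (d : ℚ) ^ (k + 1) * gbinom d n (k + 1) + gbinom d n k := by
  rcases le_or_gt k n with hk | hk
  · obtain ⟨m, rfl⟩ := Nat.exists_eq_add_of_le hk
    have h := gbinom_succ_mul hd (k + m) k
    rw [Nat.add_sub_cancel_left] at h
    rw [gbinom_succ_succ_eq_mul, div_mul_eq_mul_div,
      div_eq_iff (natCast_pow_sub_one_ne_zero hd k.add_one_ne_zero)]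
    linear_combination (-(d : ℚ) ^ (k + 1)) * h
  · rw [gbinom_of_lt (by omega), gbinom_of_lt (by omega), gbinom_of_lt hk]
    ring

theorem sum_gbinom_succ_mul (hd : d ≠ 1) (w : ℤ → ℚ) (n : ℕ) :
    ∑ k ∈ range (n + 2), gbinom d (n + 1) k * w (↑(n + 1) - k) =
      ∑ k ∈ range (n + 1), gbinom d n k * ((d : ℚ) ^ k * w (↑(n + 1) - k) + w (n - k)) := by
  have hshift : ∀ j : ℕ, (↑(n + 1) - ↑(j + 1) : ℤ) = n - j := fun j => by push_cast; ring
  calc ∑ k ∈ range (n + 2), gbinom d (n + 1) k * w (↑(n + 1) - k)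
      = ∑ k ∈ range (n + 2), (d : ℚ) ^ k * gbinom d n k * w (↑(n + 1) - k) +
          ∑ k ∈ range (n + 1), gbinom d n k * w (n - k) := by
        rw [sum_range_succ' _ (n + 1), sum_range_succ' _ (n + 1)]
        simp only [gbinom_succ_succ hd, hshift, add_mul, sum_add_distrib, gbinom_zero_right]
        ring
    _ = _ := by
        rw [sum_range_succ, gbinom_of_lt n.lt_add_one, mul_zero, zero_mul, add_zero,
          ← sum_add_distrib]
        exact sum_congr rfl fun k _ => by ring

end GaussianBinomial

noncomputable def framePotWeight (d t : ℕ) (m : ℤ) : ℚ :=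
  (d : ℚ) ^ (m * (m + 3 - 2 * t) / 2)

theorem framePotWeight_succ {d : ℕ} (hd : d ≠ 0) (t : ℕ) (m : ℤ) :
    framePotWeight d t (m + 1) = (d : ℚ) ^ (m + 2 - t) * framePotWeight d t m := by
  have hexp : (m + 1) * (m + 1 + 3 - 2 * t) / 2 = m * (m + 3 - 2 * t) / 2 + (m + 2 - t) := by
    rw [← Int.add_mul_ediv_right _ _ two_ne_zero]
    ring_nf
  rw [framePotWeight, framePotWeight, hexp, zpow_add₀ (by exact_mod_cast hd), mul_comm]

theorem sum_gbinom_mul_framePotWeight_succ {d : ℕ} (hd : 1 < d) (t n : ℕ) :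
    ∑ k ∈ range (n + 2), gbinom d (n + 1) k * framePotWeight d t (↑(n + 1) - k) =
      ((d : ℚ) ^ ((n : ℤ) + 2 - t) + 1) *
        ∑ k ∈ range (n + 1), gbinom d n k * framePotWeight d t (n - k) := by
  rw [sum_gbinom_succ_mul hd.ne', mul_sum]
  refine sum_congr rfl fun k _ => ?_
  have hpow :
      (d : ℚ) ^ k * (d : ℚ) ^ ((n : ℤ) - k + 2 - t) = (d : ℚ) ^ ((n : ℤ) + 2 - t) := by
    rw [← zpow_natCast, ← zpow_add₀ (by positivity)]
    ring_nf
  rw [show (↑(n + 1) - k : ℤ) = n - k + 1 by push_cast; ring, framePotWeight_succ (by omega)]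
  linear_combination (gbinom d n k * framePotWeight d t (n - k)) * hpow

theorem Scard_succ (d n : ℕ) : Scard d (n + 1) = d * (d ^ (n + 1) + 1) * Scard d n := by
  rw [Scard, Scard, prod_Icc_succ_top (by omega), pow_succ]
  ring

theorem framePot_eq_sum (d t n : ℕ) :
    framePot d t n =
      (Scard d n : ℚ)⁻¹ * ∑ k ∈ range (n + 1), gbinom d n k * framePotWeight d t (n - k) :=
  rfl

theorem framePot_zero (d t : ℕ) : framePot d t 0 = 1 := by
  simp [framePot, Scard, gbinom_zero_right]

theorem framePot_succ {d : ℕ} (hd : 1 < d) (t n : ℕ) :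
    framePot d t (n + 1) =
      ((d : ℚ) ^ ((n : ℤ) + 2 - t) + 1) / (d * ((d : ℚ) ^ (n + 1) + 1)) * framePot d t n := by
  rw [framePot_eq_sum, framePot_eq_sum, sum_gbinom_mul_framePotWeight_succ hd, Scard_succ]
  push_cast
  rw [mul_inv, div_eq_mul_inv]
  ring

theorem framePot_pos {d : ℕ} (hd : 1 < d) (t n : ℕ) : 0 < framePot d t n := by
  rw [framePot_eq_sum]
  have hS : 0 < Scard d n := Nat.mul_pos (by positivity) (prod_pos fun _ _ => by positivity)
  refine mul_pos (inv_pos.mpr (by exact_mod_cast hS))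
    (sum_pos (fun k hk => ?_) nonempty_range_add_one)
  exact mul_pos (gbinom_pos hd (by have := mem_range.mp hk; omega)) (zpow_pos (by positivity) _)

theorem framePot_recursion_general (d t : ℕ) (hd : d.Prime) :
    framePot d t 1 = ((d : ℚ) ^ ((2 : ℤ) - t) + 1) / (((d : ℚ) + 1) * d) ∧
    ∀ n : ℕ, 1 ≤ n →
      framePot d t (n + 1) / framePot d t n
        = ((d : ℚ) ^ ((n : ℤ) - ((t : ℤ) - 2)) + 1) / ((d : ℚ) * ((d : ℚ) ^ (n + 1) + 1)) := by
  refine ⟨?_, fun n _ => ?_⟩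
  · rw [framePot_succ hd.one_lt, framePot_zero]
    simp only [Nat.cast_zero, zero_add, pow_one, mul_one]
    ring
  · rw [framePot_succ hd.one_lt, mul_div_cancel_right₀ _ (framePot_pos hd.one_lt t n).ne']
    ring_nf

/-- **Recursion formula for the stabilizer frame potential.** For prime `d` and
`t ≥ 1`: `F_t(d,1) = (d^{2-t}+1)/((d+1)d)` and, for all `n ≥ 1`,
`F_t(d,n+1)/F_t(d,n) = (d^{n-(t-2)}+1)/(d(d^{n+1}+1))`. -/
theorem framePot_recursion (d t : ℕ) (hd : d.Prime) (ht : 1 ≤ t) :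
    framePot d t 1 = ((d : ℚ) ^ ((2 : ℤ) - t) + 1) / (((d : ℚ) + 1) * d) ∧
    ∀ n : ℕ, 1 ≤ n →
      framePot d t (n + 1) / framePot d t n
        = ((d : ℚ) ^ ((n : ℤ) - ((t : ℤ) - 2)) + 1) / ((d : ℚ) * ((d : ℚ) ^ (n + 1) + 1)) :=
  framePot_recursion_general d t hd
end
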